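/- arXiv:1701.02646 — 2 statements merged into one kernel-verified Lean document; each statement's English description precedes it below -/
import Mathlib

section
/- (Equivalence of first-order conditions, Theorem 2) Fix λ : Fin 24 → ℝ, let U : (Fin 24 → ℝ) → ℝ be differentiable at a point l of the open positive orthant {l : ∀ h, l h > 0}. Then the PPM first-order conditions ∂U/∂l_h (l) = (∂MCI/∂l_h)(l) * (Σ_m l m) + MCI(l) for all h ∈ Fin 24 hold if and only if the RTP first-order conditions ∂U/∂l_h (l) = λ h for all h ∈ Fin 24 hold, where ∂U/∂l_h (l) denotes the partial derivative of U at l in the h-th coordinate direction and (∂MCI/∂l_h)(l) = (λ h * Σ_{m ≠ h} l m − Σ_{m ≠ h} λ m * l m)/(Σ_m l m)². -/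
/-- The marginal cost impact (daily average rate) of demand `l` under real-time prices `lam`. -/
noncomputable def MCI (lam : Fin 24 → ℝ) (l : Fin 24 → ℝ) : ℝ :=
  (∑ h, lam h * l h) / (∑ h, l h)

/-- The partial derivative of `MCI` with respect to the `h`-th hourly demand. -/
noncomputable def MCIpartial (lam : Fin 24 → ℝ) (h : Fin 24) (l : Fin 24 → ℝ) : ℝ :=
  (lam h * ∑ m ∈ Finset.univ.erase h, l m
      - ∑ m ∈ Finset.univ.erase h, lam m * l m) / (∑ m, l m) ^ 2

/-- (Equivalence of first-order conditions, Theorem 2) At any point of the open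
positive orthant where `U` is differentiable, the PPM first-order conditions hold
for all hours iff the RTP first-order conditions hold for all hours. -/
theorem PPM_foc_iff_RTP_foc (lam : Fin 24 → ℝ) (U : (Fin 24 → ℝ) → ℝ)
    (l : Fin 24 → ℝ) (hl : ∀ h, 0 < l h) (hU : DifferentiableAt ℝ U l) :
    (∀ h : Fin 24,
      deriv (fun t => U (Function.update l h t)) (l h)
        = MCIpartial lam h l * (∑ m, l m) + MCI lam l) ↔
    (∀ h : Fin 24,
      deriv (fun t => U (Function.update l h t)) (l h) = lam h) := by
  have hS : 0 < ∑ m, l m := Finset.sum_pos (fun m _ => hl m) ⟨0, Finset.mem_univ 0⟩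
  have key : ∀ h : Fin 24, MCIpartial lam h l * (∑ m, l m) + MCI lam l = lam h := by
    intro h
    have h1 : ∑ m ∈ Finset.univ.erase h, l m = (∑ m, l m) - l h := by
      rw [eq_sub_iff_add_eq, Finset.sum_erase_add _ _ (Finset.mem_univ h)]
    have h2 : ∑ m ∈ Finset.univ.erase h, lam m * l m = (∑ m, lam m * l m) - lam h * l h := by
      rw [eq_sub_iff_add_eq, Finset.sum_erase_add _ _ (Finset.mem_univ h)]
    rw [MCIpartial, MCI, h1, h2]
    field_simp
    ring
  exact ⟨fun H h => (H h).trans (key h), fun H h => (H h).trans (key h).symm⟩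
end

section
/- (Theorem 3, necessity) Fix λ : Fin 24 → ℝ and let Ω = {l : Fin 24 → ℝ | ∀ h, l h > 0} be the open positive orthant. Suppose γ : (Fin 24 → ℝ) → ℝ is differentiable on Ω and satisfies, for every l ∈ Ω and every h ∈ Fin 24, the first-order condition (∂γ/∂l_h)(l) * (Σ_m l m) + γ(l) = λ h. Then there exists a constant Cst ∈ ℝ such that γ(l) = (Σ_h λ h * l h + Cst) / (Σ_m l m) for all l ∈ Ω. If moreover γ is scale-invariant on Ω (γ(α • l) = γ(l) for all α > 0 and l ∈ Ω), then Cst = 0 and γ(l) = MCI(l) for all l ∈ Ω; that is, an economically optimal daily average rate must equal the marginal cost impact. -/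
/-- The open positive orthant of demand vectors. -/
def posOrthant : Set (Fin 24 → ℝ) := {l | ∀ h, 0 < l h}

/-- (Theorem 3, necessity) If a daily average rate `γ` is differentiable on the open
positive orthant and satisfies the economically optimal first-order conditions
`(∂γ/∂l_h)(l) * (∑ m, l m) + γ(l) = λ h` there, then `γ(l) = (∑ h, λ h * l h + Cst)/(∑ m, l m)`
for some constant `Cst`; if moreover `γ` is scale-invariant on the orthant, then
`γ` equals the marginal cost impact `MCI` on the orthant. -/
theorem optimal_rate_eq_MCI (lam : Fin 24 → ℝ) (γ : (Fin 24 → ℝ) → ℝ)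
    (hdiff : DifferentiableOn ℝ γ posOrthant)
    (hfoc : ∀ l ∈ posOrthant, ∀ h : Fin 24,
      deriv (fun t => γ (Function.update l h t)) (l h) * (∑ m, l m) + γ l = lam h) :
    (∃ Cst : ℝ, ∀ l ∈ posOrthant,
        γ l = ((∑ h, lam h * l h) + Cst) / (∑ m, l m)) ∧
    ((∀ α : ℝ, 0 < α → ∀ l ∈ posOrthant, γ (α • l) = γ l) →
      ∀ l ∈ posOrthant, γ l = MCI lam l) := by
  have hpi : posOrthant = Set.pi Set.univ (fun _ : Fin 24 => Set.Ioi (0:ℝ)) := by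
    ext l; simp [posOrthant, Set.mem_pi]
  have hopen : IsOpen posOrthant := by
    rw [hpi]; exact isOpen_set_pi Set.finite_univ fun i _ => isOpen_Ioi
  have hconv : Convex ℝ posOrthant := by
    rw [hpi]; exact convex_pi fun i _ => convex_Ioi 0
  have hsum : ∀ l ∈ posOrthant, 0 < ∑ m, l m := fun l hl =>
    Finset.sum_pos (fun m _ => hl m) Finset.univ_nonempty
  set F : (Fin 24 → ℝ) → ℝ := fun l => γ l * (∑ m, l m) - ∑ m, lam m * l m with hF
  -- linear maps
  set S' : (Fin 24 → ℝ) →L[ℝ] ℝ := ∑ m, ContinuousLinearMap.proj m with hS'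
  set Λ : (Fin 24 → ℝ) →L[ℝ] ℝ := ∑ m, lam m • ContinuousLinearMap.proj m with hΛ
  have hS'app : ∀ v, S' v = ∑ m, v m := by
    intro v; simp [hS', ContinuousLinearMap.sum_apply]
  have hΛapp : ∀ v, Λ v = ∑ m, lam m * v m := by
    intro v; simp [hΛ, ContinuousLinearMap.sum_apply]
  have key : ∀ l ∈ posOrthant,
      HasFDerivAt F (γ l • S' + (∑ m, l m) • fderiv ℝ γ l - Λ) l ∧
      (γ l • S' + (∑ m, l m) • fderiv ℝ γ l - Λ) = 0 := by
    intro l hl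
    have hγd : DifferentiableAt ℝ γ l :=
      (hdiff l hl).differentiableAt (hopen.mem_nhds hl)
    have hγ : HasFDerivAt γ (fderiv ℝ γ l) l := hγd.hasFDerivAt
    have hS : HasFDerivAt (fun l : Fin 24 → ℝ => ∑ m, l m) S' l := by
      have := S'.hasFDerivAt (x := l)
      simpa [funext hS'app] using this
    have hΛd : HasFDerivAt (fun l : Fin 24 → ℝ => ∑ m, lam m * l m) Λ l := by
      have := Λ.hasFDerivAt (x := l)
      simpa [funext hΛapp] using this
    refine ⟨(hγ.mul hS).sub hΛd, ?_⟩
    ext1 v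
    have hvdecomp : v = ∑ h, v h • (Pi.single h 1 : Fin 24 → ℝ) := by
      ext m
      simp [Pi.single_apply, Finset.sum_ite_eq']
    have hsingle : ∀ h : Fin 24,
        (γ l • S' + (∑ m, l m) • fderiv ℝ γ l - Λ) (Pi.single h 1 : Fin 24 → ℝ) = 0 := by
      intro h
      have hu : HasDerivAt (fun t => Function.update l h t)
          (Pi.single h 1 : Fin 24 → ℝ) (l h) := by
        rw [hasDerivAt_pi]
        intro i
        rcases eq_or_ne i h with rfl | hi
        · simpa using (hasDerivAt_id' (l i))
        · simpa [Function.update_apply, hi, Pi.single_apply] using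
            (hasDerivAt_const (l h) (l i))
      have hcomp : HasDerivAt (fun t => γ (Function.update l h t))
          (fderiv ℝ γ l (Pi.single h 1 : Fin 24 → ℝ)) (l h) := by
        have h2 : HasFDerivAt γ (fderiv ℝ γ l) (Function.update l h (l h)) := by
          rwa [Function.update_eq_self]
        exact h2.comp_hasDerivAt (l h) hu
      have hd := hcomp.deriv
      have hfoc' := hfoc l hl h
      rw [hd] at hfoc'
      simp only [ContinuousLinearMap.sub_apply, ContinuousLinearMap.add_apply,
        ContinuousLinearMap.smul_apply, hS'app, hΛapp, smul_eq_mul]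
      have h1 : ∑ m, (Pi.single h 1 : Fin 24 → ℝ) m = 1 := by simp
      have h2 : ∑ m, lam m * (Pi.single h 1 : Fin 24 → ℝ) m = lam h := by
        simp [Pi.single_apply, mul_ite, Finset.sum_ite_eq']
      rw [h1, h2]
      linarith [hfoc']
    conv_lhs => rw [hvdecomp]
    rw [map_sum]
    simp only [map_smul, ContinuousLinearMap.zero_apply]
    rw [Finset.sum_eq_zero]
    intro h _
    rw [hsingle h, smul_zero]
  -- F is constant
  set l₁ : Fin 24 → ℝ := fun _ => 1 with hl₁def
  have hl₁ : l₁ ∈ posOrthant := fun h => one_pos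
  have hFdiff : DifferentiableOn ℝ F posOrthant := fun l hl =>
    ((key l hl).1.differentiableAt).differentiableWithinAt
  have hconst : ∀ l ∈ posOrthant, F l = F l₁ := by
    intro l hl
    refine hconv.is_const_of_fderivWithin_eq_zero hFdiff ?_ hl hl₁
    intro x hx
    rw [fderivWithin_of_isOpen hopen hx, (key x hx).1.fderiv, (key x hx).2]
  set Cst : ℝ := F l₁ with hCst
  have hform : ∀ l ∈ posOrthant, γ l = ((∑ h, lam h * l h) + Cst) / (∑ m, l m) := by
    intro l hl
    have h1 := hconst l hl
    have hS0 : (∑ m, l m) ≠ 0 := (hsum l hl).ne'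
    field_simp
    simp only [hF] at h1
    linarith [h1]
  refine ⟨⟨Cst, hform⟩, ?_⟩
  intro hscale l hl
  have hC0 : Cst = 0 := by
    have h2l : (2:ℝ) • l₁ ∈ posOrthant := fun h => by
      norm_num [hl₁def]
    have := hscale 2 two_pos l₁ hl₁
    rw [hform _ h2l, hform _ hl₁] at this
    have hA : ∑ h, lam h * ((2:ℝ) • l₁) h = 2 * ∑ h, lam h * l₁ h := by
      rw [Finset.mul_sum]; apply Finset.sum_congr rfl; intros; simp [hl₁def]; ring
    have hS : ∑ m, ((2:ℝ) • l₁) m = 2 * ∑ m, l₁ m := by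
      simp [Finset.mul_sum]
    rw [hA, hS] at this
    have hS0 : (∑ m, l₁ m) ≠ 0 := (hsum l₁ hl₁).ne'
    field_simp at this
    have hCS : Cst * (∑ m, l₁ m) = 0 := by
      have hc : Cst = 0 := by linarith
      rw [hc, zero_mul]
    exact (mul_eq_zero.mp hCS).resolve_right hS0
  rw [hform l hl, hC0, MCI]
  simp
end
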